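/- arXiv:2603.29725 — 2 statements merged into one kernel-verified Lean document; each statement's English description precedes it below -/
import Mathlib

section
/- Let A and B be positive bounded linear operators on a separable Hilbert space H. Then for any c ∈ [0,1], ‖A^c B^c‖ ≤ ‖A B‖^c (the Cordes inequality). -/
open NormedSpace Complex.HadamardThreeLines

section Helpers

variable {H : Type*} [NormedAddCommGroup H] [InnerProductSpace ℂ H] [CompleteSpace H]

lemma sa_real_smul (c : ℝ) {L : H →L[ℂ] H} (hL : IsSelfAdjoint L) :
    IsSelfAdjoint (c • L) := by
  have h : c • L = ((c : ℂ)) • L := (algebraMap_smul ℂ c _).symm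
  rw [IsSelfAdjoint, h, star_smul, hL.star_eq]
  norm_num

lemma isStarNormal_smul_sa (z : ℂ) {L : H →L[ℂ] H} (hL : IsSelfAdjoint L) :
    IsStarNormal (z • L) :=
  ⟨by rw [star_smul, hL.star_eq]; exact ((Commute.refl L).smul_left _).smul_right _⟩

lemma exp_smul_eq_cfc (z : ℂ) {L : H →L[ℂ] H} (hL : IsSelfAdjoint L) :
    exp (z • L) = cfc (fun x : ℂ => Complex.exp (z * x)) L := by
  have h1 : IsStarNormal (z • L) := isStarNormal_smul_sa z hL
  have h2 : IsStarNormal L := hL.isStarNormal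
  calc exp (z • L) = cfc Complex.exp (z • L) := (CFC.complex_exp_eq_normedSpace_exp h1).symm
    _ = cfc Complex.exp (cfc (z * ·) L) := by rw [cfc_const_mul_id z L]
    _ = cfc (fun x : ℂ => Complex.exp (z * x)) L := by
        rw [← cfc_comp' Complex.exp (z * ·) L]

variable [Nontrivial H]

lemma norm_exp_smul_le (z : ℂ) {L : H →L[ℂ] H} (hL : IsSelfAdjoint L) :
    ‖exp (z • L)‖ ≤ Real.exp (|z.re| * ‖L‖) := by
  rw [exp_smul_eq_cfc z hL]
  apply norm_cfc_le (Real.exp_pos _).le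
  intro x hx
  rw [← hL.spectrumRestricts.algebraMap_image] at hx
  obtain ⟨r, hr, rfl⟩ := hx
  have hr' : |r| ≤ ‖L‖ := Real.norm_eq_abs r ▸ spectrum.norm_le_norm_of_mem hr
  have hnorm : ‖Complex.exp (z * (algebraMap ℝ ℂ r))‖ = Real.exp (z.re * r) := by
    rw [Complex.norm_exp]
    congr 1
    simp [Complex.mul_re]
  rw [hnorm]
  apply Real.exp_le_exp.mpr
  calc z.re * r ≤ |z.re * r| := le_abs_self _
    _ = |z.re| * |r| := abs_mul _ _
    _ ≤ |z.re| * ‖L‖ := mul_le_mul_of_nonneg_left hr' (abs_nonneg _)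

lemma exp_real_smul_log (c : ℝ) {A : H →L[ℂ] H} (hA : IsSelfAdjoint A)
    (hpos : ∀ r ∈ spectrum ℝ A, 0 < r) :
    exp ((c : ℂ) • CFC.log A) = cfc (fun t : ℝ => t ^ c) A := by
  have hsmul : ((c : ℂ) • CFC.log A) = c • CFC.log A := algebraMap_smul ℂ c _
  have hLA : IsSelfAdjoint (CFC.log A) := IsSelfAdjoint.log
  have hsa : IsSelfAdjoint (c • CFC.log A) := sa_real_smul c hLA
  have hlogcont : ContinuousOn Real.log (spectrum ℝ A) :=
    Real.continuousOn_log.mono (fun x hx => by simpa using (hpos x hx).ne')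
  have hklog : c • CFC.log A = cfc (fun t : ℝ => c * Real.log t) A := by
    rw [CFC.log, ← cfc_const_mul c Real.log A hlogcont]
  have e1 : exp ((c : ℂ) • CFC.log A) = exp (c • CFC.log A) := by
    rw [hsmul]
  rw [e1, ← CFC.real_exp_eq_normedSpace_exp hsa, hklog,
    ← cfc_comp' Real.exp (fun t : ℝ => c * Real.log t) A
      Real.continuous_exp.continuousOn (by fun_prop (disch := assumption))]
  apply cfc_congr
  intro t ht
  show Real.exp (c * Real.log t) = t ^ c
  rw [Real.rpow_def_of_pos (hpos t ht), mul_comm]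

/-- The core case of the Cordes inequality: operators with spectrum bounded below
by a positive constant. -/
lemma cordes_core (A B : H →L[ℂ] H) (hA : IsSelfAdjoint A) (hB : IsSelfAdjoint B)
    {δ : ℝ} (hδ : 0 < δ)
    (hsA : ∀ r ∈ spectrum ℝ A, δ ≤ r) (hsB : ∀ r ∈ spectrum ℝ B, δ ≤ r)
    {c : ℝ} (hc : c ∈ Set.Icc (0 : ℝ) 1) :
    ‖cfc (fun t : ℝ => t ^ c) A * cfc (fun t : ℝ => t ^ c) B‖ ≤ ‖A * B‖ ^ c := by
  have hposA : ∀ r ∈ spectrum ℝ A, 0 < r := fun r hr => lt_of_lt_of_le hδ (hsA r hr)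
  have hposB : ∀ r ∈ spectrum ℝ B, 0 < r := fun r hr => lt_of_lt_of_le hδ (hsB r hr)
  have hLA : IsSelfAdjoint (CFC.log A) := IsSelfAdjoint.log
  have hLB : IsSelfAdjoint (CFC.log B) := IsSelfAdjoint.log
  set LA := CFC.log A with hLAdef
  set LB := CFC.log B with hLBdef
  set f : ℂ → (H →L[ℂ] H) := fun z => exp (z • LA) * exp (z • LB) with hfdef
  -- differentiability
  have hdiff : Differentiable ℂ f :=
    Differentiable.mul (fun z => (hasDerivAt_exp_smul_const LA z).differentiableAt)
      (fun z => (hasDerivAt_exp_smul_const LB z).differentiableAt)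
  have hd : DiffContOnCl ℂ f (verticalStrip 0 1) := hdiff.diffContOnCl
  -- boundedness on the strip
  have hBdd : BddAbove ((norm ∘ f) '' (verticalClosedStrip 0 1)) := by
    refine ⟨Real.exp ‖LA‖ * Real.exp ‖LB‖, ?_⟩
    rintro y ⟨z, hz, rfl⟩
    have hz' : |z.re| ≤ 1 := by
      rw [abs_le]; exact ⟨le_trans (by norm_num) hz.1, hz.2⟩
    have h1 : ‖exp (z • LA)‖ ≤ Real.exp ‖LA‖ := by
      refine (norm_exp_smul_le z hLA).trans (Real.exp_le_exp.mpr ?_)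
      calc |z.re| * ‖LA‖ ≤ 1 * ‖LA‖ := mul_le_mul_of_nonneg_right hz' (norm_nonneg _)
        _ = ‖LA‖ := one_mul _
    have h2 : ‖exp (z • LB)‖ ≤ Real.exp ‖LB‖ := by
      refine (norm_exp_smul_le z hLB).trans (Real.exp_le_exp.mpr ?_)
      calc |z.re| * ‖LB‖ ≤ 1 * ‖LB‖ := mul_le_mul_of_nonneg_right hz' (norm_nonneg _)
        _ = ‖LB‖ := one_mul _
    exact (norm_mul_le _ _).trans
      (mul_le_mul h1 h2 (norm_nonneg _) (Real.exp_pos _).le)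
  -- boundary at re = 0
  have hbd0 : ∀ z ∈ Complex.re ⁻¹' {0}, ‖f z‖ ≤ 1 := by
    intro z hz
    have hz0 : z.re = 0 := hz
    have h1 : ‖exp (z • LA)‖ ≤ 1 := by
      simpa [hz0] using norm_exp_smul_le z hLA
    have h2 : ‖exp (z • LB)‖ ≤ 1 := by
      simpa [hz0] using norm_exp_smul_le z hLB
    calc ‖f z‖ ≤ ‖exp (z • LA)‖ * ‖exp (z • LB)‖ := norm_mul_le _ _
      _ ≤ 1 * 1 := mul_le_mul h1 h2 (norm_nonneg _) zero_le_one
      _ = 1 := one_mul _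
  -- exp at 1 recovers A and B
  have hexpA : exp ((1 : ℂ) • LA) = A := by
    rw [one_smul, hLAdef, CFC.exp_log A ((StarOrderedRing.isStrictlyPositive_iff_spectrum_pos (R := ℝ) A hA).mpr hposA)]
  have hexpB : exp ((1 : ℂ) • LB) = B := by
    rw [one_smul, hLBdef, CFC.exp_log B ((StarOrderedRing.isStrictlyPositive_iff_spectrum_pos (R := ℝ) B hB).mpr hposB)]
  -- boundary at re = 1
  have hbd1 : ∀ z ∈ Complex.re ⁻¹' {1}, ‖f z‖ ≤ ‖A * B‖ := by
    intro z hz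
    have hz1 : z.re = 1 := hz
    letI : NormedAlgebra ℚ (H →L[ℂ] H) := NormedAlgebra.restrictScalars ℚ ℂ (H →L[ℂ] H)
    set w : ℂ := z - 1 with hwdef
    have hw : w.re = 0 := by simp [hwdef, hz1]
    have hzw : z = w + 1 := by simp [hwdef]
    have hfA : exp (z • LA) = exp (w • LA) * A := by
      rw [hzw, add_smul, exp_add_of_commute (((Commute.refl LA).smul_left w).smul_right 1),
        hexpA]
    have hfB : exp (z • LB) = B * exp (w • LB) := by
      rw [hzw, add_comm w 1, add_smul, exp_add_of_commute
        (((Commute.refl LB).smul_left 1).smul_right w), hexpB]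
    have h1 : ‖exp (w • LA)‖ ≤ 1 := by simpa [hw] using norm_exp_smul_le w hLA
    have h2 : ‖exp (w • LB)‖ ≤ 1 := by simpa [hw] using norm_exp_smul_le w hLB
    have hfz : f z = exp (w • LA) * (A * B) * exp (w • LB) := by
      show exp (z • LA) * exp (z • LB) = _
      rw [hfA, hfB]
      simp only [mul_assoc]
    rw [hfz]
    calc ‖exp (w • LA) * (A * B) * exp (w • LB)‖
        ≤ ‖exp (w • LA) * (A * B)‖ * ‖exp (w • LB)‖ := norm_mul_le _ _
      _ ≤ ‖exp (w • LA)‖ * ‖A * B‖ * ‖exp (w • LB)‖ :=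
          mul_le_mul_of_nonneg_right (norm_mul_le _ _) (norm_nonneg _)
      _ ≤ 1 * ‖A * B‖ * 1 :=
          mul_le_mul (mul_le_mul_of_nonneg_right h1 (norm_nonneg _)) h2
            (norm_nonneg _) (by positivity)
      _ = ‖A * B‖ := by ring
  -- value at c
  have hfc : f (c : ℂ) = cfc (fun t : ℝ => t ^ c) A * cfc (fun t : ℝ => t ^ c) B := by
    show exp ((c : ℂ) • LA) * exp ((c : ℂ) • LB) = _
    rw [hLAdef, hLBdef, exp_real_smul_log c hA hposA, exp_real_smul_log c hB hposB]
  have hmem : (c : ℂ) ∈ verticalClosedStrip 0 1 := by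
    simpa [verticalClosedStrip] using hc
  have hfinal := norm_le_interp_of_mem_verticalClosedStrip' zero_lt_one hmem hd hBdd hbd0 hbd1
  rw [hfc] at hfinal
  simpa [Real.one_rpow] using hfinal

lemma rpow_sub_le {t ε c : ℝ} (ht : 0 ≤ t) (hε : 0 ≤ ε) (hc0 : 0 ≤ c) (hc1 : c ≤ 1) :
    (t + ε) ^ c ≤ t ^ c + ε ^ c := by
  calc (t + ε) ^ c = ((Real.toNNReal t + Real.toNNReal ε : NNReal) : ℝ) ^ c := by
        rw [NNReal.coe_add, Real.coe_toNNReal t ht, Real.coe_toNNReal ε hε]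
    _ = (((Real.toNNReal t + Real.toNNReal ε) ^ c : NNReal) : ℝ) := (NNReal.coe_rpow _ _).symm
    _ ≤ (((Real.toNNReal t) ^ c + (Real.toNNReal ε) ^ c : NNReal) : ℝ) :=
        NNReal.coe_le_coe.mpr (NNReal.rpow_add_le_add_rpow _ _ hc0 hc1)
    _ = t ^ c + ε ^ c := by
        rw [NNReal.coe_add, NNReal.coe_rpow, NNReal.coe_rpow, Real.coe_toNNReal t ht,
          Real.coe_toNNReal ε hε]

/-- Shift of a positive operator: spectrum bounds and cfc composition. -/
lemma cfc_shift (A : H →L[ℂ] H) (hA : IsSelfAdjoint A) (ε : ℝ) :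
    A + ε • (1 : H →L[ℂ] H) = cfc (fun t : ℝ => t + ε) A := by
  have h := cfc_add_const ε (id : ℝ → ℝ) A continuousOn_id hA
  simp only [id_eq, cfc_id ℝ A, Algebra.algebraMap_eq_smul_one] at h
  exact h.symm

end Helpers

set_option maxHeartbeats 2000000 in
/-- Cordes inequality: for positive bounded operators `A, B` on a separable Hilbert
space and `c ∈ [0,1]`, `‖A^c B^c‖ ≤ ‖A B‖^c`. -/
theorem cordes_inequality
    {H : Type*} [NormedAddCommGroup H] [InnerProductSpace ℂ H] [CompleteSpace H]
    [TopologicalSpace.SeparableSpace H]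
    (A B : H →L[ℂ] H) (hA : A.IsPositive) (hB : B.IsPositive)
    (c : ℝ) (hc : c ∈ Set.Icc (0 : ℝ) 1) :
    ‖cfc (fun t : ℝ => t ^ c) A * cfc (fun t : ℝ => t ^ c) B‖ ≤ ‖A * B‖ ^ c := by
  rcases subsingleton_or_nontrivial H with hH | hH
  · have h0 : (cfc (fun t : ℝ => t ^ c) A * cfc (fun t : ℝ => t ^ c) B) = 0 :=
      Subsingleton.elim _ _
    rw [h0, norm_zero]
    exact Real.rpow_nonneg (norm_nonneg _) c
  have hA' : IsSelfAdjoint A := hA.isSelfAdjoint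
  have hB' : IsSelfAdjoint B := hB.isSelfAdjoint
  have hA0 : (0 : H →L[ℂ] H) ≤ A := (ContinuousLinearMap.nonneg_iff_isPositive A).mpr hA
  have hB0 : (0 : H →L[ℂ] H) ≤ B := (ContinuousLinearMap.nonneg_iff_isPositive B).mpr hB
  have hspA : ∀ r ∈ spectrum ℝ A, 0 ≤ r := fun r hr => spectrum_nonneg_of_nonneg hA0 hr
  have hspB : ∀ r ∈ spectrum ℝ B, 0 ≤ r := fun r hr => spectrum_nonneg_of_nonneg hB0 hr
  obtain ⟨hc0, hc1⟩ := hc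
  rcases eq_or_lt_of_le hc0 with hc0' | hc0'
  · -- c = 0
    simp only [← hc0', Real.rpow_zero]
    rw [cfc_const 1 A hA', cfc_const 1 B hB', map_one, one_mul, norm_one]
  -- 0 < c
  set X := cfc (fun t : ℝ => t ^ c) A with hXdef
  set Y := cfc (fun t : ℝ => t ^ c) B with hYdef
  have hrpow_cont : ∀ (T : H →L[ℂ] H), ContinuousOn (fun t : ℝ => t ^ c) (spectrum ℝ T) :=
    fun T => fun t _ => (Real.continuousAt_rpow_const t c (Or.inr hc0)).continuousWithinAt
  -- key estimate for each small ε
  have key : ∀ ε ∈ Set.Ioc (0 : ℝ) 1,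
      ‖X * Y‖ ≤ ‖(A + ε • 1) * (B + ε • 1)‖ ^ c + ε ^ c * (‖Y‖ + (‖X‖ + 1)) := by
    intro ε hε
    obtain ⟨hε0, hε1⟩ := hε
    have approx : ∀ (T : H →L[ℂ] H), IsSelfAdjoint T → (∀ r ∈ spectrum ℝ T, 0 ≤ r) →
        IsSelfAdjoint (T + ε • 1) ∧ (∀ r ∈ spectrum ℝ (T + ε • 1), ε ≤ r) ∧
        cfc (fun t : ℝ => t ^ c) (T + ε • 1) = cfc (fun t : ℝ => (t + ε) ^ c) T ∧
        ‖cfc (fun t : ℝ => t ^ c) (T + ε • 1) - cfc (fun t : ℝ => t ^ c) T‖ ≤ ε ^ c := by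
      intro T hT hTsp
      have hshift := cfc_shift T hT ε
      have hsa : IsSelfAdjoint (T + ε • 1) := by
        rw [hshift]; exact cfc_predicate _ T
      have hspec : spectrum ℝ (T + ε • 1) = (fun t : ℝ => t + ε) '' spectrum ℝ T := by
        rw [hshift]
        exact cfc_map_spectrum (fun t : ℝ => t + ε) T
      have hlow : ∀ r ∈ spectrum ℝ (T + ε • 1), ε ≤ r := by
        rw [hspec]
        rintro r ⟨t, ht, rfl⟩
        have := hTsp t ht
        show ε ≤ t + ε
        linarith
      have hcontg : ContinuousOn (fun s : ℝ => s ^ c) ((fun t : ℝ => t + ε) '' spectrum ℝ T) :=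
        fun s _ => (Real.continuousAt_rpow_const s c (Or.inr hc0)).continuousWithinAt
      have hcomp : cfc (fun t : ℝ => t ^ c) (T + ε • 1) = cfc (fun t : ℝ => (t + ε) ^ c) T := by
        rw [hshift, ← cfc_comp' (fun s : ℝ => s ^ c) (fun t : ℝ => t + ε) T hcontg]
      have hsub : cfc (fun t : ℝ => (t + ε) ^ c) T - cfc (fun t : ℝ => t ^ c) T
          = cfc (fun t : ℝ => (t + ε) ^ c - t ^ c) T := by
        have hcont2 : ContinuousOn (fun s : ℝ => (s + ε) ^ c) (spectrum ℝ T) :=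
          (continuousOn_id.add continuousOn_const).rpow_const (fun x _ => Or.inr hc0)
        rw [cfc_sub (fun t : ℝ => (t + ε) ^ c) (fun t : ℝ => t ^ c) T hcont2 (hrpow_cont T)]
      have hdiff : ‖cfc (fun t : ℝ => t ^ c) (T + ε • 1) - cfc (fun t : ℝ => t ^ c) T‖
          ≤ ε ^ c := by
        rw [hcomp, hsub]
        apply norm_cfc_le (Real.rpow_nonneg hε0.le c)
        intro t ht
        have ht0 : 0 ≤ t := hTsp t ht
        have hmono : t ^ c ≤ (t + ε) ^ c :=
          Real.rpow_le_rpow ht0 (by linarith) hc0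
        have hsubadd : (t + ε) ^ c ≤ t ^ c + ε ^ c := rpow_sub_le ht0 hε0.le hc0 hc1
        rw [Real.norm_eq_abs, abs_of_nonneg (by linarith)]
        linarith
      exact ⟨hsa, hlow, hcomp, hdiff⟩
    obtain ⟨hsaA, hlowA, hcompA, hdiffA⟩ := approx A hA' hspA
    obtain ⟨hsaB, hlowB, hcompB, hdiffB⟩ := approx B hB' hspB
    set Xe := cfc (fun t : ℝ => t ^ c) (A + ε • 1) with hXe
    set Ye := cfc (fun t : ℝ => t ^ c) (B + ε • 1) with hYe
    have hcore : ‖Xe * Ye‖ ≤ ‖(A + ε • 1) * (B + ε • 1)‖ ^ c :=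
      cordes_core (A + ε • 1) (B + ε • 1) hsaA hsaB hε0 hlowA hlowB ⟨hc0, hc1⟩
    have hXeN : ‖Xe‖ ≤ ‖X‖ + 1 := by
      have h1 : ‖Xe‖ ≤ ‖X‖ + ‖Xe - X‖ := by
        calc ‖Xe‖ = ‖X + (Xe - X)‖ := by rw [add_sub_cancel]
          _ ≤ ‖X‖ + ‖Xe - X‖ := norm_add_le _ _
      have h2 : ε ^ c ≤ 1 := Real.rpow_le_one hε0.le hε1 hc0
      linarith [hdiffA]
    have hsplit : X * Y = (X - Xe) * Y + Xe * (Y - Ye) + Xe * Ye := by noncomm_ring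
    calc ‖X * Y‖ = ‖(X - Xe) * Y + Xe * (Y - Ye) + Xe * Ye‖ := by rw [← hsplit]
      _ ≤ ‖(X - Xe) * Y + Xe * (Y - Ye)‖ + ‖Xe * Ye‖ := norm_add_le _ _
      _ ≤ ‖(X - Xe) * Y‖ + ‖Xe * (Y - Ye)‖ + ‖Xe * Ye‖ := by
          have := norm_add_le ((X - Xe) * Y) (Xe * (Y - Ye))
          linarith
      _ ≤ ‖X - Xe‖ * ‖Y‖ + ‖Xe‖ * ‖Y - Ye‖ + ‖Xe * Ye‖ := by
          have h1 := norm_mul_le (X - Xe) Y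
          have h2 := norm_mul_le Xe (Y - Ye)
          linarith
      _ ≤ ε ^ c * ‖Y‖ + (‖X‖ + 1) * ε ^ c + ‖(A + ε • 1) * (B + ε • 1)‖ ^ c := by
          have h1 : ‖X - Xe‖ ≤ ε ^ c := by rw [norm_sub_rev]; exact hdiffA
          have h2 : ‖Xe‖ * ‖Y - Ye‖ ≤ (‖X‖ + 1) * ε ^ c := by
            apply mul_le_mul hXeN (norm_sub_rev Ye Y ▸ hdiffB) (norm_nonneg _)
            positivity
          have h3 : ‖X - Xe‖ * ‖Y‖ ≤ ε ^ c * ‖Y‖ :=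
            mul_le_mul_of_nonneg_right h1 (norm_nonneg _)
          linarith
      _ = ‖(A + ε • 1) * (B + ε • 1)‖ ^ c + ε ^ c * (‖Y‖ + (‖X‖ + 1)) := by ring
  -- limit as ε → 0⁺
  have h1 : Filter.Tendsto (fun ε : ℝ => ‖(A + ε • 1) * (B + ε • 1)‖ ^ c)
      (nhdsWithin 0 (Set.Ioi 0)) (nhds (‖A * B‖ ^ c)) := by
    have hcont1 : Continuous (fun ε : ℝ => (A + ε • 1) * (B + ε • 1)) :=
      (continuous_const.add (continuous_id.smul continuous_const)).mul
        (continuous_const.add (continuous_id.smul continuous_const))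
    have ht1 : Filter.Tendsto (fun ε : ℝ => (A + ε • 1) * (B + ε • 1)) (nhds 0)
        (nhds (A * B)) := by
      have h00 : (A + (0 : ℝ) • 1) * (B + (0 : ℝ) • 1) = A * B := by
        rw [zero_smul, add_zero, add_zero]
      simpa only [h00] using hcont1.tendsto 0
    have ht2 := ht1.norm
    exact ((Real.continuousAt_rpow_const (‖A * B‖) c (Or.inr hc0)).tendsto.comp
      ht2).mono_left nhdsWithin_le_nhds
  have h2 : Filter.Tendsto (fun ε : ℝ => ε ^ c * (‖Y‖ + (‖X‖ + 1)))
      (nhdsWithin 0 (Set.Ioi 0)) (nhds 0) := by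
    have hca : ContinuousAt (fun ε : ℝ => ε ^ c) 0 :=
      Real.continuousAt_rpow_const 0 c (Or.inr hc0)
    have h0 : (0 : ℝ) ^ c = 0 := Real.zero_rpow hc0'.ne'
    have := (hca.tendsto.mono_left (nhdsWithin_le_nhds
      (s := Set.Ioi (0:ℝ)))).mul_const (‖Y‖ + (‖X‖ + 1))
    rw [h0, zero_mul] at this
    exact this
  have hmem : Set.Ioc (0 : ℝ) 1 ∈ nhdsWithin (0 : ℝ) (Set.Ioi 0) :=
    Ioc_mem_nhdsGT_of_mem (by norm_num : (0 : ℝ) ∈ Set.Ico (0 : ℝ) 1)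
  have hlim := (h1.add h2)
  rw [add_zero] at hlim
  exact ge_of_tendsto hlim (Filter.eventually_of_mem hmem key)
end

section
/- Let L_S and L_T be positive self-adjoint bounded operators on a Hilbert space H, α ∈ (0,1), μ > 0, and L_{R,μ} = (1-α)L_S + αL_T + μI. Then ‖L_{R,μ}^{-1/2} L_S L_{R,μ}^{-1/2}‖ ≥ ‖L_S‖ / ((1-α)‖L_S‖ + α‖L_T‖ + μ). -/
open ContinuousLinearMap in
lemma aux_smul_isPositive {H : Type*} [NormedAddCommGroup H] [InnerProductSpace ℂ H]
    [CompleteSpace H] {T : H →L[ℂ] H} (hT : T.IsPositive) {r : ℝ} (hr : 0 ≤ r) :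
    (r • T).IsPositive := by
  rw [RCLike.real_smul_eq_coe_smul (K := ℂ)]
  exact hT.smul_of_nonneg (Complex.zero_le_real.mpr hr)

set_option maxHeartbeats 1000000 in
set_option synthInstance.maxHeartbeats 400000 in
/-- Lower bound for the conjugated operator: with `L_{R,μ} = (1-α)L_S + αL_T + μI`,
`‖L_{R,μ}^{-1/2} L_S L_{R,μ}^{-1/2}‖ ≥ ‖L_S‖ / ((1-α)‖L_S‖ + α‖L_T‖ + μ)`. -/
theorem conjugated_operator_norm_ge
    {H : Type*} [NormedAddCommGroup H] [InnerProductSpace ℂ H] [CompleteSpace H]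
    (LS LT : H →L[ℂ] H) (hS : LS.IsPositive) (hT : LT.IsPositive)
    (α μ : ℝ) (hα : α ∈ Set.Ioo (0 : ℝ) 1) (hμ : 0 < μ)
    (LR : H →L[ℂ] H) (hLR : LR = (1 - α) • LS + α • LT + μ • 1) :
    ‖LS‖ / ((1 - α) * ‖LS‖ + α * ‖LT‖ + μ) ≤
      ‖cfc (fun t : ℝ => (Real.sqrt t)⁻¹) LR * LS *
        cfc (fun t : ℝ => (Real.sqrt t)⁻¹) LR‖ := by
  obtain ⟨hα0, hα1⟩ := hα
  obtain hsub | hnt := subsingleton_or_nontrivial H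
  · have : LS = 0 := Subsingleton.elim _ _
    simp [this]
  set c : ℝ := (1 - α) * ‖LS‖ + α * ‖LT‖ + μ with hc_def
  have hc : 0 < c := by
    have h1 : 0 ≤ (1 - α) * ‖LS‖ := mul_nonneg (by linarith) (norm_nonneg _)
    have h2 : 0 ≤ α * ‖LT‖ := mul_nonneg hα0.le (norm_nonneg _)
    linarith
  have hSnn : (0 : H →L[ℂ] H) ≤ LS := (ContinuousLinearMap.nonneg_iff_isPositive LS).mpr hS
  -- LR is positive
  have hLRpos : LR.IsPositive := by
    rw [hLR]
    exact ((aux_smul_isPositive hS (by linarith)).add (aux_smul_isPositive hT hα0.le)).add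
      (aux_smul_isPositive ContinuousLinearMap.isPositive_one hμ.le)
  have hLRnn : (0 : H →L[ℂ] H) ≤ LR := (ContinuousLinearMap.nonneg_iff_isPositive LR).mpr hLRpos
  have hLRsa : IsSelfAdjoint LR := hLRpos.isSelfAdjoint
  -- spectrum of LR is contained in [μ, ∞)
  have hmule : algebraMap ℝ (H →L[ℂ] H) μ ≤ LR := by
    rw [ContinuousLinearMap.le_def]
    have : LR - algebraMap ℝ (H →L[ℂ] H) μ = (1 - α) • LS + α • LT := by
      rw [hLR, Algebra.algebraMap_eq_smul_one]
      abel
    rw [this]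
    exact (aux_smul_isPositive hS (by linarith)).add (aux_smul_isPositive hT hα0.le)
  have hspec : ∀ t ∈ spectrum ℝ LR, μ ≤ t :=
    (algebraMap_le_iff_le_spectrum hLRsa).mp hmule
  set f : ℝ → ℝ := fun t => (Real.sqrt t)⁻¹ with hf_def
  set B : H →L[ℂ] H := cfc f LR with hB_def
  set C : H →L[ℂ] H := cfc Real.sqrt LR with hC_def
  have hfc : ContinuousOn f (spectrum ℝ LR) := by
    apply ContinuousOn.inv₀ Real.continuous_sqrt.continuousOn
    intro t ht
    exact Real.sqrt_ne_zero'.mpr (lt_of_lt_of_le hμ (hspec t ht))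
  have hgc : ContinuousOn Real.sqrt (spectrum ℝ LR) := Real.continuous_sqrt.continuousOn
  have hBC : B * C = 1 := by
    rw [hB_def, hC_def, ← cfc_mul f Real.sqrt LR hfc hgc, ← cfc_one (R := ℝ) LR]
    apply cfc_congr
    intro t ht
    exact inv_mul_cancel₀ (Real.sqrt_ne_zero'.mpr (lt_of_lt_of_le hμ (hspec t ht)))
  have hCB : C * B = 1 := by
    rw [hB_def, hC_def, ← cfc_mul Real.sqrt f LR hgc hfc, ← cfc_one (R := ℝ) LR]
    apply cfc_congr
    intro t ht
    exact mul_inv_cancel₀ (Real.sqrt_ne_zero'.mpr (lt_of_lt_of_le hμ (hspec t ht)))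
  have hCC : C * C = LR := by
    rw [hC_def, ← cfc_mul Real.sqrt Real.sqrt LR hgc hgc]
    nth_rw 2 [← cfc_id ℝ LR]
    apply cfc_congr
    intro t ht
    exact Real.mul_self_sqrt (le_trans hμ.le (hspec t ht))
  have hBsa : IsSelfAdjoint B := cfc_predicate f LR
  have hCsa : IsSelfAdjoint C := cfc_predicate Real.sqrt LR
  set D : H →L[ℂ] H := B * LS * B with hD_def
  have hDnn : (0 : H →L[ℂ] H) ≤ D := by
    have := star_left_conjugate_nonneg hSnn B
    rwa [hBsa.star_eq] at this
  have hDsa : IsSelfAdjoint D := .of_nonneg hDnn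
  -- LR ≤ c • 1
  have hLRle : LR ≤ algebraMap ℝ (H →L[ℂ] H) c := by
    rw [← CStarAlgebra.norm_le_iff_le_algebraMap LR hc.le hLRnn, hLR]
    calc ‖(1 - α) • LS + α • LT + μ • (1 : H →L[ℂ] H)‖
        ≤ ‖(1 - α) • LS‖ + ‖α • LT‖ + ‖μ • (1 : H →L[ℂ] H)‖ := norm_add₃_le
      _ = (1 - α) * ‖LS‖ + α * ‖LT‖ + μ * ‖(1 : H →L[ℂ] H)‖ := by
          rw [norm_smul, norm_smul, norm_smul, Real.norm_eq_abs, Real.norm_eq_abs,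
            Real.norm_eq_abs, abs_of_pos (by linarith : (0:ℝ) < 1 - α), abs_of_pos hα0,
            abs_of_pos hμ]
      _ = c := by rw [norm_one, mul_one]
  -- D ≤ ‖D‖ • 1, conjugate by C
  have hD1 : D ≤ algebraMap ℝ (H →L[ℂ] H) ‖D‖ := hDsa.le_algebraMap_norm_self
  have hconj : C * D * C ≤ C * algebraMap ℝ (H →L[ℂ] H) ‖D‖ * C := by
    have := star_left_conjugate_le_conjugate hD1 C
    rwa [hCsa.star_eq] at this
  have hLHS : C * D * C = LS := by
    have h1 : C * D * C = (C * B) * LS * (B * C) := by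
      rw [hD_def]; noncomm_ring
    rw [h1, hCB, hBC, one_mul, mul_one]
  have hRHS : C * algebraMap ℝ (H →L[ℂ] H) ‖D‖ * C = ‖D‖ • LR := by
    rw [Algebra.algebraMap_eq_smul_one, mul_smul_comm, mul_one, smul_mul_assoc, hCC]
  have hLS_le : LS ≤ ‖D‖ • LR := by rw [← hLHS, ← hRHS]; exact hconj
  have hsmul_le : ‖D‖ • LR ≤ ‖D‖ • algebraMap ℝ (H →L[ℂ] H) c := by
    rw [ContinuousLinearMap.le_def, ← smul_sub]
    exact aux_smul_isPositive
      ((ContinuousLinearMap.nonneg_iff_isPositive _).mp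
        (sub_nonneg.mpr hLRle)) (norm_nonneg D)
  have hfinal : LS ≤ algebraMap ℝ (H →L[ℂ] H) (‖D‖ * c) := by
    calc LS ≤ ‖D‖ • LR := hLS_le
      _ ≤ ‖D‖ • algebraMap ℝ (H →L[ℂ] H) c := hsmul_le
      _ = algebraMap ℝ (H →L[ℂ] H) (‖D‖ * c) := by
          rw [Algebra.algebraMap_eq_smul_one, Algebra.algebraMap_eq_smul_one, mul_smul]
  have hnorm : ‖LS‖ ≤ ‖D‖ * c :=
    (CStarAlgebra.norm_le_iff_le_algebraMap LS (mul_nonneg (norm_nonneg _) hc.le) hSnn).mpr hfinal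
  rw [div_le_iff₀ hc]
  exact hnorm
end
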